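/- Let $G_1, \ldots, G_m$ and $E_1, \ldots, E_m$ be finite sets of nonzero reals with $E_k \cap G_k = \varnothing$, $\#E_k > c\, \#G_k$ for each $k$ (for a constant $c > 0$), and suppose the sets $A_k = E_k \cup G_k$ satisfy $\max A_{k+1} \le \frac14 d(A_k)$ for $1 \le k < m$. Set $G = G_1 + \cdots + G_m$, $F_k = \sum_{i \ne k} G_i + E_k$, and $E = \bigcup_{k=1}^m F_k$. Then $\#E \ge m\, c\, \#G$. -/

import Mathlib

/-!
Call `A_k = E_k ∪ G_k`. Since `max A_{k+1} ≤ d(A_k)/4` and `d(A) ≤ 2 max A`, induction along the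
chain, starting from `0 < |a_m| ≤ max A_m`, gives `|∑ a_i| < 2 max A_1` for every choice
`a_i ∈ A_i`. Hence two choices with equal sums agree in the first coordinate (otherwise the tails
would differ by at least `d(A_1)`, while each tail sum is smaller than `2 max A_2 ≤ d(A_1)/2` in
absolute value), and then everywhere. So `g ↦ ∑ g_i` is injective on `∏ A_i`: this gives
`#G = ∏ #G_i`, `#F_k = #E_k ∏_{i ≠ k} #G_i`, and the `F_k` are pairwise disjoint because
`E_k ∩ G_k = ∅`. Summing `c #G_k < #E_k` over `k` after multiplying by `∏_{i ≠ k} #G_i`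
finishes the proof.
-/

/-- Minimal gap of a finite set: min distance between distinct points if `2 ≤ card`,
and `|x|` for a singleton `{x}`. -/
noncomputable def dGap (A : Finset ℝ) : ℝ :=
  if 2 ≤ A.card then sInf {r : ℝ | ∃ x ∈ A, ∃ y ∈ A, x ≠ y ∧ r = |x - y|}
  else sInf {r : ℝ | ∃ x ∈ A, r = |x|}

/-- `max A = max_{a ∈ A} |a|`. -/
noncomputable def maxAbs (A : Finset ℝ) : ℝ := sSup {r : ℝ | ∃ x ∈ A, r = |x|}

open Finset Function

lemma abs_le_maxAbs {A : Finset ℝ} {x : ℝ} (hx : x ∈ A) : |x| ≤ maxAbs A := by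
  refine le_csSup ?_ ⟨x, hx, rfl⟩
  refine ((A.finite_toSet.image abs).subset ?_).bddAbove
  rintro _ ⟨y, hy, rfl⟩
  exact ⟨y, hy, rfl⟩

lemma dGap_le_abs_sub {A : Finset ℝ} {x y : ℝ} (hx : x ∈ A) (hy : y ∈ A) (hxy : x ≠ y) :
    dGap A ≤ |x - y| := by
  rw [dGap, if_pos (show 2 ≤ #A from one_lt_card.mpr ⟨x, hx, y, hy, hxy⟩)]
  exact csInf_le ⟨0, fun _ ⟨_, _, _, _, _, hr⟩ => hr ▸ abs_nonneg _⟩ ⟨x, hx, y, hy, hxy, rfl⟩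

lemma dGap_le_two_mul_maxAbs {A : Finset ℝ} (hA : A.Nonempty) : dGap A ≤ 2 * maxAbs A := by
  by_cases h2 : 2 ≤ #A
  · obtain ⟨x, hx, y, hy, hxy⟩ := one_lt_card.mp h2
    calc dGap A ≤ |x - y| := dGap_le_abs_sub hx hy hxy
      _ ≤ |x| + |y| := abs_sub x y
      _ ≤ 2 * maxAbs A := by linarith [abs_le_maxAbs hx, abs_le_maxAbs hy]
  · obtain ⟨x, rfl⟩ := card_eq_one.mp (show #A = 1 by have := hA.card_pos; omega)
    have hx := abs_le_maxAbs (mem_singleton_self x)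
    have hdx : dGap {x} = |x| := by simp [dGap]
    linarith [abs_nonneg x]

def IsSeparatedChain {m : ℕ} (A : Fin m → Finset ℝ) : Prop :=
  ∀ k : Fin m, ∀ h : (k : ℕ) + 1 < m, maxAbs (A ⟨k + 1, h⟩) ≤ dGap (A k) / 4

namespace IsSeparatedChain

variable {n : ℕ}

lemma tail {A : Fin (n + 1) → Finset ℝ} (hA : IsSeparatedChain A) :
    IsSeparatedChain fun i : Fin n => A i.succ :=
  fun k h => hA k.succ (by simpa using h)

lemma maxAbs_one_le {A : Fin (n + 2) → Finset ℝ} (hA : IsSeparatedChain A) :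
    maxAbs (A 1) ≤ dGap (A 0) / 4 :=
  hA 0 (by simp)

end IsSeparatedChain

lemma abs_sum_lt_two_mul_maxAbs {n : ℕ} {A : Fin (n + 1) → Finset ℝ}
    (hA0 : ∀ i, ∀ x ∈ A i, x ≠ 0) (hA : IsSeparatedChain A) {a : Fin (n + 1) → ℝ}
    (ha : ∀ i, a i ∈ A i) : |∑ i, a i| < 2 * maxAbs (A 0) := by
  induction n with
  | zero =>
    have hpos := abs_pos.mpr (hA0 0 _ (ha 0))
    rw [Fin.sum_univ_one]
    linarith [abs_le_maxAbs (ha 0)]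
  | succ n ih =>
    have htail := ih (fun i => hA0 i.succ) hA.tail (fun i => ha i.succ)
    have hgap := dGap_le_two_mul_maxAbs ⟨a 0, ha 0⟩
    have hnext : maxAbs (A (Fin.succ 0)) ≤ dGap (A 0) / 4 := hA.maxAbs_one_le
    rw [Fin.sum_univ_succ]
    linarith [abs_add_le (a 0) (∑ i : Fin (n + 1), a i.succ), abs_le_maxAbs (ha 0)]

/-- The uniqueness-of-representation lemma. -/
lemma injOn_sum_piFinset {m : ℕ} {A : Fin m → Finset ℝ} (hA0 : ∀ i, ∀ x ∈ A i, x ≠ 0)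
    (hA : IsSeparatedChain A) :
    Set.InjOn (fun g : Fin m → ℝ => ∑ i, g i) (Fintype.piFinset A) := by
  induction m with
  | zero => exact fun _ _ _ _ _ => Subsingleton.elim _ _
  | succ n ih =>
    intro a ha b hb hab
    simp only [mem_coe, Fintype.mem_piFinset] at ha hb
    simp only [Fin.sum_univ_succ] at hab
    have hhead : a 0 = b 0 := by
      cases n with
      | zero => simpa using hab
      | succ n =>
        by_contra hne
        have hgap := dGap_le_abs_sub (ha 0) (hb 0) hne
        have hsa := abs_sum_lt_two_mul_maxAbs (fun i => hA0 i.succ) hA.tail (fun i => ha i.succ)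
        have hsb := abs_sum_lt_two_mul_maxAbs (fun i => hA0 i.succ) hA.tail (fun i => hb i.succ)
        rw [show a 0 - b 0 = ∑ i : Fin (n + 1), b i.succ - ∑ i : Fin (n + 1), a i.succ by
          linarith] at hgap
        have hnext : maxAbs (A (Fin.succ 0)) ≤ dGap (A 0) / 4 := hA.maxAbs_one_le
        linarith [abs_sub (∑ i : Fin (n + 1), b i.succ) (∑ i : Fin (n + 1), a i.succ)]
    have htail : (fun i : Fin n => a i.succ) = fun i => b i.succ :=
      ih (fun i => hA0 i.succ) hA.tail (by simpa using fun i : Fin n => ha i.succ)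
        (by simpa using fun i : Fin n => hb i.succ) (by simpa [hhead] using hab)
    funext i
    exact Fin.cases hhead (congrFun htail) i

noncomputable def sumset {m : ℕ} (B : Fin m → Finset ℝ) : Finset ℝ :=
  (Fintype.piFinset B).image fun g => ∑ i, g i

lemma coe_sumset {m : ℕ} (B : Fin m → Finset ℝ) :
    (sumset B : Set ℝ) = {z | ∃ g : Fin m → ℝ, (∀ i, g i ∈ B i) ∧ z = ∑ i, g i} := by
  ext z
  simp [sumset, eq_comm]

lemma card_sumset_of_injOn {m : ℕ} {B : Fin m → Finset ℝ}
    (hB : Set.InjOn (fun g : Fin m → ℝ => ∑ i, g i) (Fintype.piFinset B)) :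
    #(sumset B) = ∏ i, #(B i) := by
  rw [sumset, card_image_of_injOn hB, Fintype.card_piFinset]

lemma mul_prod_le_prod_update {ι : Type*} [Fintype ι] [DecidableEq ι] {f : ι → ℝ}
    (hf : ∀ i, 0 ≤ f i) {c b : ℝ} {k : ι} (hk : c * f k ≤ b) :
    c * ∏ i, f i ≤ ∏ i, update f k b i := by
  rw [prod_update_of_mem (mem_univ k), prod_eq_mul_prod_sdiff_singleton_of_mem (mem_univ k),
    ← mul_assoc]
  exact mul_le_mul_of_nonneg_right hk (prod_nonneg fun i _ => hf i)

section

variable {m : ℕ} {A E G : Fin m → Finset ℝ}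

lemma coe_sumset_update (k : Fin m) :
    (sumset (update G k (E k)) : Set ℝ) =
      {z | ∃ g : Fin m → ℝ, (∀ i, i ≠ k → g i ∈ G i) ∧ g k ∈ E k ∧ z = ∑ i, g i} := by
  have hmem (g : Fin m → ℝ) :
      (∀ i, g i ∈ update G k (E k) i) ↔ (∀ i, i ≠ k → g i ∈ G i) ∧ g k ∈ E k :=
    (forall_update_iff G fun i s => g i ∈ s).trans and_comm
  simp only [coe_sumset, hmem, and_assoc]

lemma piFinset_update_subset (hEA : ∀ k, E k ⊆ A k) (hGA : ∀ k, G k ⊆ A k) (k : Fin m) :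
    Fintype.piFinset (update G k (E k)) ⊆ Fintype.piFinset A := by
  refine Fintype.piFinset_subset _ _ fun i => ?_
  rcases eq_or_ne i k with rfl | hik
  · simpa using hEA i
  · simpa [hik] using hGA i

lemma disjoint_sumset_update (hinj : Set.InjOn (fun g : Fin m → ℝ => ∑ i, g i) (Fintype.piFinset A))
    (hEA : ∀ k, E k ⊆ A k) (hGA : ∀ k, G k ⊆ A k) (hdisj : ∀ k, Disjoint (E k) (G k))
    {k l : Fin m} (hkl : k ≠ l) :
    Disjoint (sumset (update G k (E k))) (sumset (update G l (E l))) := by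
  refine disjoint_left.mpr fun z hzk hzl => ?_
  obtain ⟨g, hg, rfl⟩ := mem_image.mp hzk
  obtain ⟨g', hg', hgg'⟩ := mem_image.mp hzl
  obtain rfl : g' = g := hinj (piFinset_update_subset hEA hGA l hg')
    (piFinset_update_subset hEA hGA k hg) hgg'
  have hE : g' k ∈ E k := by simpa using Fintype.mem_piFinset.mp hg k
  have hG : g' k ∈ G k := by simpa [hkl] using Fintype.mem_piFinset.mp hg' k
  exact disjoint_left.mp (hdisj k) hE hG

end

theorem stmt18_general (m : ℕ) (E G : Fin m → Finset ℝ) (c : ℝ)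
    (hE0 : ∀ k, ∀ a ∈ E k, a ≠ 0) (hG0 : ∀ k, ∀ a ∈ G k, a ≠ 0)
    (hdisj : ∀ k, Disjoint (E k) (G k))
    (hcard : ∀ k, c * ((G k).card : ℝ) < ((E k).card : ℝ))
    (hmax : ∀ k : Fin m, ∀ h : (k : ℕ) + 1 < m,
      maxAbs (E ⟨(k : ℕ) + 1, h⟩ ∪ G ⟨(k : ℕ) + 1, h⟩) ≤ dGap (E k ∪ G k) / 4) :
    (m : ℝ) * c *
        ({z : ℝ | ∃ g : Fin m → ℝ, (∀ i, g i ∈ G i) ∧ z = ∑ i, g i}.ncard : ℝ)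
      ≤ ((⋃ k : Fin m,
          {z : ℝ | ∃ g : Fin m → ℝ, (∀ i, i ≠ k → g i ∈ G i) ∧ g k ∈ E k ∧
            z = ∑ i, g i}).ncard : ℝ) := by
  set A : Fin m → Finset ℝ := fun k => E k ∪ G k
  have hEA : ∀ k, E k ⊆ A k := fun k => subset_union_left
  have hGA : ∀ k, G k ⊆ A k := fun k => subset_union_right
  have hinj := injOn_sum_piFinset
    (fun k x hx => (mem_union.mp hx).elim (hE0 k x) (hG0 k x)) (A := A) hmax
  have hunion : (⋃ k : Fin m,
      {z : ℝ | ∃ g : Fin m → ℝ, (∀ i, i ≠ k → g i ∈ G i) ∧ g k ∈ E k ∧ z = ∑ i, g i}) =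
        ↑(univ.biUnion fun k => sumset (update G k (E k))) := by
    simp [coe_sumset_update]
  rw [← coe_sumset, hunion, Set.ncard_coe_finset, Set.ncard_coe_finset,
    card_biUnion fun k _ l _ hkl => disjoint_sumset_update hinj hEA hGA hdisj hkl,
    card_sumset_of_injOn (hinj.mono (Fintype.piFinset_subset _ _ hGA))]
  push_cast
  calc (m : ℝ) * c * ∏ i, (#(G i) : ℝ) = ∑ k : Fin m, c * ∏ i, (#(G i) : ℝ) := by
        simp [mul_assoc]
    _ ≤ ∑ k, ∏ i, update (fun i => (#(G i) : ℝ)) k #(E k) i :=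
        sum_le_sum fun k _ => mul_prod_le_prod_update (fun i => by positivity) (hcard k).le
    _ = ∑ k, (#(sumset (update G k (E k))) : ℝ) := by
        refine sum_congr rfl fun k _ => ?_
        rw [card_sumset_of_injOn (hinj.mono (piFinset_update_subset hEA hGA k))]
        push_cast
        exact prod_congr rfl fun i _ => (apply_update (fun _ s => (#s : ℝ)) G k (E k) i).symm

theorem stmt18 (m : ℕ) (E G : Fin m → Finset ℝ) (c : ℝ) (hc : 0 < c)
    (hE0 : ∀ k, ∀ a ∈ E k, a ≠ 0) (hG0 : ∀ k, ∀ a ∈ G k, a ≠ 0)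
    (hdisj : ∀ k, Disjoint (E k) (G k))
    (hcard : ∀ k, c * ((G k).card : ℝ) < ((E k).card : ℝ))
    (hmax : ∀ k : Fin m, ∀ h : (k : ℕ) + 1 < m,
      maxAbs (E ⟨(k : ℕ) + 1, h⟩ ∪ G ⟨(k : ℕ) + 1, h⟩) ≤ dGap (E k ∪ G k) / 4) :
    (m : ℝ) * c *
        ({z : ℝ | ∃ g : Fin m → ℝ, (∀ i, g i ∈ G i) ∧ z = ∑ i, g i}.ncard : ℝ)
      ≤ ((⋃ k : Fin m,
          {z : ℝ | ∃ g : Fin m → ℝ, (∀ i, i ≠ k → g i ∈ G i) ∧ g k ∈ E k ∧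
            z = ∑ i, g i}).ncard : ℝ) :=
  stmt18_general m E G c hE0 hG0 hdisj hcard hmax
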